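/- Let P be a finite set of positive integers, m = min P, n ≥ 1, and suppose n - m ≤ i ≤ m - 1 (in particular n ≤ 2m - 1 and this range is nonempty). Then the equivalence class [i]_{P,n} under ≈_{P,n} is the singleton {i}. -/

import Mathlib

/-- minimum of a finite set of naturals (as `sInf`). -/
noncomputable def mP (P : Finset ℕ) : ℕ := sInf (↑P : Set ℕ)

/-- the generating relation `∼_{P,k}` on `{0,…,k-1}`. -/
def simRel (P : Finset ℕ) (k i j : ℕ) : Prop :=
  i < k ∧ j < k ∧ (i % mP P = j % mP P ∨
    ∃ i' j', i' < k ∧ j' < k ∧ i' % mP P = i % mP P ∧ j' % mP P = j % mP P ∧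
      (max i' j' - min i' j') ∈ P)

/-- the class of `i` under the equivalence closure `≈_{P,k}`. -/
def cls (P : Finset ℕ) (k i : ℕ) : Set ℕ := {j | Relation.EqvGen (simRel P k) i j}

/-- the FW-word: `FW P k i = min [i]_{P,k}`. -/
noncomputable def FW (P : Finset ℕ) (k : ℕ) : ℕ → ℕ := fun i => sInf (cls P k i)

/-- Euclidean reduction `Q = {p - m : p ∈ P, p ≠ m} ∪ {m}`. -/
noncomputable def Qred (P : Finset ℕ) : Finset ℕ :=
  ((P.erase (mP P)).image (fun p => p - mP P)) ∪ {mP P}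

/-- `p` is a period of the word `w` of length `n`. -/
def HasPeriodF {A : Type*} (w : ℕ → A) (n p : ℕ) : Prop :=
  ∀ i, i + p < n → w i = w (i + p)

theorem Relation.EqvGen.eq_of_isolated {α : Type*} {r : α → α → Prop} {x y : α}
    (hout : ∀ y, r x y → y = x) (hin : ∀ y, r y x → y = x) (h : EqvGen r x y) : y = x := by
  have hequiv : Equivalence fun a b => a = x ↔ b = x := ⟨fun _ => Iff.rfl, Iff.symm, Iff.trans⟩
  have hle : ∀ a b, r a b → (a = x ↔ b = x) := fun a b hab =>
    ⟨by rintro rfl; exact hout b hab, by rintro rfl; exact hin a hab⟩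
  exact (hequiv.eqvGen_iff.mp (h.mono hle)).mp rfl

theorem Nat.eq_of_mod_eq_of_lt_add {m i j : ℕ} (hj : j < i + m) (h : j % m = i) : j = i := by
  have hdiv := Nat.div_add_mod j m
  have : m * (j / m) < m * 1 := by omega
  have : j / m = 0 := by simpa using Nat.lt_of_mul_lt_mul_left this
  simp_all

theorem mP_le_of_mem {P : Finset ℕ} {p : ℕ} (hp : p ∈ P) : mP P ≤ p :=
  Nat.sInf_le hp

theorem simRel_symm {P : Finset ℕ} {n i j : ℕ} : simRel P n i j → simRel P n j i := by
  rintro ⟨hi, hj, hmod | ⟨i', j', hi', hj', hii, hjj, hp⟩⟩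
  · exact ⟨hj, hi, .inl hmod.symm⟩
  · exact ⟨hj, hi, .inr ⟨j', i', hj', hi', hjj, hii, by rwa [max_comm, min_comm]⟩⟩

/-- Since `n ≤ i + m`, the only index below `n` congruent to `i < m` is `i` itself, and since
every `p ∈ P` is at least `m`, a step of length `p` from `i` leaves `[0, n)`. -/
theorem simRel_eq_of_left {P : Finset ℕ} {n i j : ℕ} (hn : n - mP P ≤ i) (hi : i < mP P)
    (h : simRel P n i j) : j = i := by
  have hres : ∀ k < n, k % mP P = i % mP P → k = i := fun k hk hkm =>
    Nat.eq_of_mod_eq_of_lt_add (m := mP P) (by omega) (by rwa [Nat.mod_eq_of_lt hi] at hkm)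
  obtain ⟨-, hj, hmod | ⟨i', j', hi', hj', hii, -, hp⟩⟩ := h
  · exact hres j hj hmod.symm
  · obtain rfl := hres i' hi' hii
    have := mP_le_of_mem hp
    omega

theorem stmt4_general (P : Finset ℕ)
    (n i : ℕ) (h1 : n - mP P ≤ i) (h3 : i < mP P) :
    cls P n i = {i} := by
  ext j
  constructor
  · exact fun h => h.eq_of_isolated (fun _ => simRel_eq_of_left h1 h3)
      (fun _ hj => simRel_eq_of_left h1 h3 (simRel_symm hj))
  · rintro rfl
    exact .refl _

theorem stmt4 (P : Finset ℕ) (hP : P.Nonempty) (hpos : ∀ p ∈ P, 0 < p)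
    (n i : ℕ) (hn : 1 ≤ n) (h1 : n - mP P ≤ i) (h2 : i ≤ mP P - 1) (h3 : i < mP P) :
    cls P n i = {i} :=
  stmt4_general P n i h1 h3
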